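/- Any bounded nonincreasing probability density f on [0,∞) can be represented as a scale mixture of uniform densities: there exists a probability measure G on (0,∞) such that f(x) = ∫₀^∞ θ⁻¹ 1_{[0,θ]}(x) dG(θ) for almost every x ≥ 0. -/

import Mathlib

/-!
Let `μ = -df` be the Stieltjes measure of the monotone function `-f`. Integrability forces
`x f(x) ≤ ∫ f`, so `f → 0` at infinity and `μ [x, ∞) = f(x)` at every continuity point of `f`,
hence almost everywhere. The mixing measure is `dG(θ) = θ dμ(θ)`: its total mass is
`∫ θ dμ(θ) = ∫₀^∞ μ [t, ∞) dt = ∫ f = 1` by the layer-cake formula, and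
`∫ θ⁻¹ 1_{θ ≥ x} dG(θ) = μ [x, ∞) = f(x)`.
-/

open MeasureTheory Set Real Filter Topology Function

namespace Monotone

variable {φ : ℝ → ℝ} (hφ : Monotone φ)

lemma leftLim_stieltjesFunction_of_continuousAt {x : ℝ} (hx : ContinuousAt φ x) :
    leftLim hφ.stieltjesFunction x = φ x := by
  change leftLim (rightLim φ) x = φ x
  rw [leftLim_rightLim (hφ.tendsto_leftLim x)]
  exact hx.continuousWithinAt.leftLim_eq

lemma measure_stieltjesFunction_Ici {l : ℝ} (hl : Tendsto φ atTop (𝓝 l)) {x : ℝ}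
    (hx : ContinuousAt φ x) :
    hφ.stieltjesFunction.measure (Ici x) = ENNReal.ofReal (l - φ x) := by
  rw [StieltjesFunction.measure_Ici _ (tendsto_rightLim_atTop_of_tendsto hl),
    hφ.leftLim_stieltjesFunction_of_continuousAt hx]

end Monotone

namespace AntitoneOn

variable {f : ℝ → ℝ}

lemma mul_le_setIntegral_Ioi (hf_anti : AntitoneOn f (Ioi 0))
    (hf_nonneg : ∀ x, 0 < x → 0 ≤ f x) (hf_int : IntegrableOn f (Ioi 0)) {b : ℝ} (hb : 0 < b) :
    b * f b ≤ ∫ x in Ioi 0, f x :=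
  calc b * f b = ∫ _ in Ioc 0 b, f b := by simp [hb.le]
    _ ≤ ∫ x in Ioc 0 b, f x :=
      setIntegral_mono_on (integrableOn_const (by simp)) (hf_int.mono_set Ioc_subset_Ioi_self)
        measurableSet_Ioc fun x hx => hf_anti hx.1 hb hx.2
    _ ≤ ∫ x in Ioi 0, f x :=
      setIntegral_mono_set hf_int ((ae_restrict_iff' measurableSet_Ioi).2 (.of_forall hf_nonneg))
        Ioc_subset_Ioi_self.eventuallyLE

lemma tendsto_atTop_zero_of_integrableOn (hf_anti : AntitoneOn f (Ioi 0))
    (hf_nonneg : ∀ x, 0 < x → 0 ≤ f x) (hf_int : IntegrableOn f (Ioi 0)) :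
    Tendsto f atTop (𝓝 0) := by
  have hC : Tendsto (fun x => (∫ x in Ioi 0, f x) * x⁻¹) atTop (𝓝 0) := by
    simpa using tendsto_inv_atTop_zero.const_mul (∫ x in Ioi 0, f x)
  refine tendsto_of_tendsto_of_tendsto_of_le_of_le' tendsto_const_nhds hC ?_ ?_
  · filter_upwards [eventually_gt_atTop 0] with x hx using hf_nonneg x hx
  · filter_upwards [eventually_gt_atTop 0] with x hx
    rw [le_mul_inv_iff₀ hx, mul_comm]
    exact hf_anti.mul_le_setIntegral_Ioi hf_nonneg hf_int hx

lemma exists_measure_Ici_ae_eq (hf_anti : AntitoneOn f (Ici 0)) (hf_lim : Tendsto f atTop (𝓝 0)) :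
    ∃ μ : Measure ℝ, ∀ᵐ x, 0 < x → μ (Ici x) = ENNReal.ofReal (f x) := by
  set φ : ℝ → ℝ := fun x => -f (max x 0)
  have hφ : Monotone φ := fun x y hxy =>
    neg_le_neg (hf_anti (le_max_right x 0) (le_max_right y 0) (max_le_max_right 0 hxy))
  have hφ_lim : Tendsto φ atTop (𝓝 0) := by
    refine neg_zero (G := ℝ) ▸ hf_lim.neg.congr' ?_
    filter_upwards [eventually_ge_atTop 0] with x hx
    simp [φ, max_eq_left hx]
  refine ⟨hφ.stieltjesFunction.measure, ?_⟩
  filter_upwards [hφ.countable_not_continuousAt.ae_notMem volume] with x hx hx_pos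
  rw [hφ.measure_stieltjesFunction_Ici hφ_lim (not_not.1 hx)]
  simp [φ, max_eq_left hx_pos.le]

end AntitoneOn

section UniformMixture

variable (μ : Measure ℝ)

lemma integral_indicator_Icc_inv_withDensity {x : ℝ} (hx : 0 < x) :
    ∫ θ, (Icc 0 θ).indicator (fun _ => θ⁻¹) x ∂μ.withDensity (fun θ => ENNReal.ofReal θ) =
      μ.real (Ici x) := by
  rw [integral_withDensity_eq_integral_toReal_smul ENNReal.measurable_ofReal
    (.of_forall fun _ => ENNReal.ofReal_lt_top), ← integral_indicator_one measurableSet_Ici]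
  refine integral_congr_ae (.of_forall fun θ => ?_)
  by_cases h : x ≤ θ
  · have hθ : 0 < θ := hx.trans_le h
    simp [indicator_of_mem, hx.le, h, hθ.le, hθ.ne']
  · simp [indicator_of_notMem, h]

lemma withDensity_ofReal_Iic_zero : μ.withDensity (fun θ => ENNReal.ofReal θ) (Iic 0) = 0 := by
  rw [withDensity_apply _ measurableSet_Iic,
    setLIntegral_congr_fun measurableSet_Iic fun θ hθ => ENNReal.ofReal_eq_zero.2 hθ]
  simp

lemma withDensity_ofReal_univ :
    μ.withDensity (fun θ => ENNReal.ofReal θ) univ = ∫⁻ t in Ioi 0, μ (Ici t) := by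
  rw [withDensity_apply _ MeasurableSet.univ, Measure.restrict_univ]
  have layercake := lintegral_eq_lintegral_meas_le μ (.of_forall fun θ => le_max_right θ 0)
    (measurable_id.max measurable_const).aemeasurable
  simp only [ENNReal.ofReal_max, ENNReal.ofReal_zero, zero_le, max_eq_left] at layercake
  rw [layercake]
  refine setLIntegral_congr_fun measurableSet_Ioi fun t ht => ?_
  congr 1
  ext θ
  simp [not_le.2 (show (0:ℝ) < t from ht)]

end UniformMixture

theorem decreasing_density_is_uniform_mixture_general
    (f : ℝ → ℝ)
    (hf_nonneg : ∀ x, 0 ≤ x → 0 ≤ f x)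
    (hf_anti : AntitoneOn f (Set.Ici 0))
    (hf_int : ∫ x in Set.Ioi (0:ℝ), f x = 1) :
    ∃ G : Measure ℝ, IsProbabilityMeasure G ∧ G (Set.Ioi 0) = 1 ∧
      ∀ᵐ x : ℝ, 0 ≤ x →
        f x = ∫ θ, (Set.Icc 0 θ).indicator (fun _ => θ⁻¹) x ∂G := by
  have hf_pos : ∀ x, 0 < x → 0 ≤ f x := fun x hx => hf_nonneg x hx.le
  have hf_intOn : IntegrableOn f (Ioi 0) := Integrable.of_integral_ne_zero (by simp [hf_int])
  obtain ⟨μ, hμ⟩ := hf_anti.exists_measure_Ici_ae_eq <|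
    (hf_anti.mono Ioi_subset_Ici_self).tendsto_atTop_zero_of_integrableOn hf_pos hf_intOn
  set G := μ.withDensity (fun θ => ENNReal.ofReal θ)
  have hG_univ : G univ = 1 := by
    rw [withDensity_ofReal_univ, setLIntegral_congr_fun_ae measurableSet_Ioi hμ,
      ← ofReal_integral_eq_lintegral_ofReal hf_intOn
        ((ae_restrict_iff' measurableSet_Ioi).2 (.of_forall hf_pos)), hf_int, ENNReal.ofReal_one]
  have : IsProbabilityMeasure G := ⟨hG_univ⟩
  refine ⟨G, this, ?_, ?_⟩
  · rw [← compl_Iic, prob_compl_eq_one_iff measurableSet_Iic]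
    exact withDensity_ofReal_Iic_zero μ
  · filter_upwards [hμ, Measure.ae_ne volume 0] with x hx hx_ne hx_nonneg
    have hx_pos : 0 < x := hx_nonneg.lt_of_ne' hx_ne
    rw [integral_indicator_Icc_inv_withDensity μ hx_pos, measureReal_def, hx hx_pos,
      ENNReal.toReal_ofReal (hf_nonneg x hx_nonneg)]

/-- Khinchine/Williamson: any bounded nonincreasing probability density on [0,∞)
is a scale mixture of uniform densities. -/
theorem decreasing_density_is_uniform_mixture
    (f : ℝ → ℝ)
    (hf_nonneg : ∀ x, 0 ≤ x → 0 ≤ f x)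
    (hf_anti : AntitoneOn f (Set.Ici 0))
    (hf_bdd : ∃ M : ℝ, ∀ x, 0 ≤ x → f x ≤ M)
    (hf_int : ∫ x in Set.Ioi (0:ℝ), f x = 1) :
    ∃ G : Measure ℝ, IsProbabilityMeasure G ∧ G (Set.Ioi 0) = 1 ∧
      ∀ᵐ x : ℝ, 0 ≤ x →
        f x = ∫ θ, (Set.Icc 0 θ).indicator (fun _ => θ⁻¹) x ∂G :=
  decreasing_density_is_uniform_mixture_general f hf_nonneg hf_anti hf_int
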